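/- arXiv:0707.1365 — 3 statements merged into one kernel-verified Lean document; each statement's English description precedes it below -/
import Mathlib

section
/- Let J be a strongly stable Artinian monomial ideal in S = k[x_1,x_2,x_3]. Then J is almost reverse lexicographic if and only if f_3(0,|α|+1) + 1 ≤ f_3(α) for every α = (α_1,α_2) ∈ J_2. (This is the monomial-ideal content of the paper's Proposition: for a homogeneous Artinian ideal I of k[x_1,x_2,x_3] in characteristic 0, S/I has the strong Lefschetz property if and only if gin(I) is almost reverse lexicographic.) -/
/-
Combinatorial framework: a monomial ideal in `k[x_1,…,x_n]` is encoded by its set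
of monomials, viewed as exponent vectors in `Fin n → ℕ` (with `x_1,…,x_n`
corresponding to indices `0,…,n-1`).
-/

/-- A monomial ideal: a set of exponent vectors closed under multiplication by
arbitrary monomials. -/
def IsMonomialIdeal {n : ℕ} (S : Set (Fin n → ℕ)) : Prop :=
  ∀ m ∈ S, ∀ m' : Fin n → ℕ, m + m' ∈ S

/-- `R/J` is a finite-dimensional `k`-vector space iff the set of standard
monomials (the complement of the monomial set of `J`) is finite. -/
def IsArtinianMonomialSet {n : ℕ} (S : Set (Fin n → ℕ)) : Prop :=
  Sᶜ.Finite

/-- Strong stability: if `m ∈ J`, `x_j ∣ m` and `i < j`, then `x_i · m / x_j ∈ J`. -/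
def IsStronglyStable {n : ℕ} (S : Set (Fin n → ℕ)) : Prop :=
  ∀ m ∈ S, ∀ i j : Fin n, i < j → 0 < m j →
    (fun l => if l = i then m i + 1 else if l = j then m j - 1 else m l) ∈ S

/-- `x^a < x^b` in the reverse lexicographic order with `x_1 > ⋯ > x_n`
(used to compare monomials of the same degree): at the last index where the
exponents differ, `a` has the larger exponent. -/
def RevLexLT {n : ℕ} (a b : Fin n → ℕ) : Prop :=
  ∃ j : Fin n, b j < a j ∧ ∀ l : Fin n, j < l → a l = b l

/-- Total degree of a monomial. -/
def mdeg {n : ℕ} (m : Fin n → ℕ) : ℕ := ∑ l, m l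

/-- `m` is a minimal (monomial) generator of the monomial ideal `S`. -/
def IsMinGen {n : ℕ} (S : Set (Fin n → ℕ)) (m : Fin n → ℕ) : Prop :=
  m ∈ S ∧ ∀ m' ∈ S, (∀ l, m' l ≤ m l) → m' = m

/-- Almost reverse lexicographic: `S` contains every monomial that is greater in
reverse lexicographic order than some minimal generator of `S` of the same degree. -/
def AlmostRevLex {n : ℕ} (S : Set (Fin n → ℕ)) : Prop :=
  ∀ M N : Fin n → ℕ, IsMinGen S N → mdeg M = mdeg N → RevLexLT N M → M ∈ S

/-- The exponent vector of `x_1^{α 0} ⋯ x_i^{α (i-1)} · x_{i+1}^t`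
(0-based: positions `0,…,i-1` carry `α`, position `i` carries `t`). -/
def monVec (n i : ℕ) (α : ℕ → ℕ) (t : ℕ) : Fin n → ℕ :=
  fun l => if (l : ℕ) < i then α l else if (l : ℕ) = i then t else 0

/-- `fF S i α = min {t : x_1^{α 0}⋯x_i^{α (i-1)} · x_{i+1}^t ∈ S}`; this is the
paper's `f_{i+1}(α_1,…,α_i)` (0-based `i`, so `fF S 0 _` is the paper's `f_1`). -/
noncomputable def fF {n : ℕ} (S : Set (Fin n → ℕ)) (i : ℕ) (α : ℕ → ℕ) : ℕ :=
  sInf {t | monVec n i α t ∈ S}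

/-- The paper's set `J_i`: tuples `(α_1,…,α_i)` (recorded in positions
`0,…,i-1` and padded by zeros) with `α_1 < f_1` and
`α_j < f_j(α_1,…,α_{j-1})` for `2 ≤ j ≤ i`. -/
def JSet {n : ℕ} (S : Set (Fin n → ℕ)) (i : ℕ) : Set (ℕ → ℕ) :=
  {α | (∀ l, i ≤ l → α l = 0) ∧ ∀ j, j < i → α j < fF S j α}

/-- `|α| = α_1 + ⋯ + α_i`. -/
def asum (i : ℕ) (α : ℕ → ℕ) : ℕ := ∑ j ∈ Finset.range i, α j

/-- The tuple `(0,…,0,s)` of length `i`. -/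
def lastVec (i s : ℕ) : ℕ → ℕ := fun l => if l = i - 1 then s else 0

/-- Reverse lexicographic comparison of `i`-tuples: `x^a < x^b`. -/
def RevLexLT' (a b : ℕ → ℕ) : Prop :=
  ∃ j : ℕ, b j < a j ∧ ∀ l, j < l → a l = b l


/-!
Write `f(a, b)` for the least `t` with `x₁^a x₂^b x₃^t ∈ J`. Strong stability makes `f`
non-increasing under the moves `(a, b + 1) ↦ (a + 1, b)`, and makes `f(a, b + 1) ≤ f(a, b) - 1`.
A minimal generator `N` satisfies `N₃ = f(N₁, N₂)`. A revlex-larger monomial `M` of the same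
degree either has `M₃ = N₃`, and is then reached from `N` by such moves, or `M₃ < N₃`; in the
latter case the two facts reduce `M ∈ J` to `x₂^(N₁+N₂+1) x₃^(N₃-1) ∈ J`, which is the condition
`f(0, N₁ + N₂ + 1) < f(N₁, N₂)`. Conversely, a minimal generator `g` dividing
`x₁^a x₂^b x₃^f(a,b)` has `g₃ = f(a, b)`, and `x₂^(g₁+g₂+1) x₃^(g₃-1)` is revlex-larger than `g`
of the same degree, which gives the condition at `(a, b)`.
-/

open Function

section General

variable {n : ℕ} {S : Set (Fin n → ℕ)}

theorem IsMonomialIdeal.isUpperSet (hI : IsMonomialIdeal S) : IsUpperSet S := by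
  intro m m' hle hm
  simpa [add_tsub_cancel_of_le hle] using hI m hm (m' - m)

theorem IsArtinianMonomialSet.preimage_nonempty (hA : IsArtinianMonomialSet S)
    {g : ℕ → Fin n → ℕ} (hg : Injective g) : (g ⁻¹' S).Nonempty := by
  by_contra h
  refine (Set.infinite_range_of_injective hg).mono ?_ hA
  rintro _ ⟨t, rfl⟩ ht
  exact h ⟨t, ht⟩

theorem mem_iff_sInf_preimage_le (hI : IsMonomialIdeal S) (hA : IsArtinianMonomialSet S)
    {g : ℕ → Fin n → ℕ} (hg : StrictMono g) {t : ℕ} : g t ∈ S ↔ sInf (g ⁻¹' S) ≤ t :=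
  ⟨fun h ↦ Nat.sInf_le h, fun h ↦
    hI.isUpperSet.preimage hg.monotone h (Nat.sInf_mem (hA.preimage_nonempty hg.injective))⟩

theorem isMinGen_iff_minimal {m : Fin n → ℕ} : IsMinGen S m ↔ Minimal (· ∈ S) m :=
  and_congr_right fun _ ↦
    ⟨fun h m' hm' hle ↦ (h m' hm' hle).ge, fun h _ hm' hle ↦ le_antisymm hle (h hm' hle)⟩

theorem exists_isMinGen_le {m : Fin n → ℕ} (hm : m ∈ S) : ∃ g ≤ m, IsMinGen S g := by
  simpa only [isMinGen_iff_minimal] using exists_minimal_le_of_wellFoundedLT (· ∈ S) m hm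

theorem monVec_strictMono {i : ℕ} (hi : i < n) (α : ℕ → ℕ) : StrictMono (monVec n i α) := by
  intro s t hst
  refine Pi.lt_def.2 ⟨fun l ↦ ?_, ⟨i, hi⟩, ?_⟩ <;> simp only [monVec] <;> split_ifs <;>
    simp_all [hst.le]

theorem lt_fF_iff (hI : IsMonomialIdeal S) (hA : IsArtinianMonomialSet S) {i : ℕ} (hi : i < n)
    (α : ℕ → ℕ) {t : ℕ} : t < fF S i α ↔ monVec n i α t ∉ S := by
  rw [mem_iff_sInf_preimage_le hI hA (monVec_strictMono hi α), not_le]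
  rfl

end General

theorem mdeg_three (m : Fin 3 → ℕ) : mdeg m = m 0 + m 1 + m 2 := by
  simp [mdeg, Fin.sum_univ_three]

theorem revLexLT_three {M N : Fin 3 → ℕ} (h : RevLexLT N M) (hdeg : mdeg M = mdeg N) :
    M 2 < N 2 ∨ (M 2 = N 2 ∧ M 1 < N 1) := by
  obtain ⟨j, hj, hjl⟩ := h
  rw [mdeg_three, mdeg_three] at hdeg
  fin_cases j
  · have := hjl 1 (by decide); have := hjl 2 (by decide); simp_all
  · have := hjl 2 (by decide); simp_all
  · simp_all

/-- The paper's `f_3(a, b)`. -/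
noncomputable def f₃ (S : Set (Fin 3 → ℕ)) (a b : ℕ) : ℕ := sInf {t | ![a, b, t] ∈ S}

section ThreeVariables

variable {S : Set (Fin 3 → ℕ)}

theorem IsStronglyStable.exchange₁₂ (hSS : IsStronglyStable S)
    {a b c : ℕ} (h : ![a, b + 1, c] ∈ S) : ![a + 1, b, c] ∈ S := by
  convert hSS _ h 0 1 (by decide) (by simp) using 1
  funext l; fin_cases l <;> simp

theorem IsStronglyStable.exchange₂₃ (hSS : IsStronglyStable S)
    {a b c : ℕ} (h : ![a, b, c + 1] ∈ S) : ![a, b + 1, c] ∈ S := by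
  convert hSS _ h 1 2 (by decide) (by simp) using 1
  funext l; fin_cases l <;> simp

theorem mem_iff_f₃_le (hI : IsMonomialIdeal S) (hA : IsArtinianMonomialSet S) {a b c : ℕ} :
    ![a, b, c] ∈ S ↔ f₃ S a b ≤ c :=
  mem_iff_sInf_preimage_le hI hA (g := fun t ↦ ![a, b, t])
    fun s t hst ↦ Pi.lt_def.2 ⟨fun l ↦ by fin_cases l <;> simp [hst.le], 2, by simpa⟩

theorem f₃_antitone (hI : IsMonomialIdeal S) (hA : IsArtinianMonomialSet S) {a b a' b' : ℕ}
    (ha : a ≤ a') (hb : b ≤ b') : f₃ S a' b' ≤ f₃ S a b := by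
  rw [← mem_iff_f₃_le hI hA]
  refine hI.isUpperSet ?_ ((mem_iff_f₃_le hI hA (a := a) (b := b)).2 le_rfl)
  intro l; fin_cases l <;> simp [ha, hb]

theorem IsMinGen.f₃_eq (hI : IsMonomialIdeal S) (hA : IsArtinianMonomialSet S)
    {N : Fin 3 → ℕ} (hN : IsMinGen S N) : f₃ S (N 0) (N 1) = N 2 := by
  have hmem : ![N 0, N 1, N 2] ∈ S := by
    convert hN.1 using 1; funext l; fin_cases l <;> rfl
  have hle := (mem_iff_f₃_le hI hA).1 hmem
  have := congrFun (hN.2 _ ((mem_iff_f₃_le hI hA (a := N 0) (b := N 1)).2 le_rfl) fun l ↦ by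
    fin_cases l <;> simp [hle]) 2
  simpa using this

theorem f₃_add_left_le (hI : IsMonomialIdeal S) (hA : IsArtinianMonomialSet S)
    (hSS : IsStronglyStable S) (a b k : ℕ) : f₃ S (a + k) b ≤ f₃ S a (b + k) := by
  induction k generalizing b with
  | zero => rfl
  | succ k ih =>
    calc f₃ S (a + k + 1) b ≤ f₃ S (a + k) (b + 1) := by
          rw [← mem_iff_f₃_le hI hA]
          exact hSS.exchange₁₂ ((mem_iff_f₃_le hI hA).2 le_rfl)
      _ ≤ f₃ S a (b + 1 + k) := ih _
      _ = f₃ S a (b + (k + 1)) := by rw [add_right_comm, add_assoc]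

theorem f₃_succ_right_le_pred (hI : IsMonomialIdeal S) (hA : IsArtinianMonomialSet S)
    (hSS : IsStronglyStable S) (a b : ℕ) : f₃ S a (b + 1) ≤ f₃ S a b - 1 := by
  rcases Nat.eq_zero_or_pos (f₃ S a b) with h | h
  · simpa [h] using f₃_antitone hI hA (le_refl a) b.le_succ
  · obtain ⟨c, hc⟩ := Nat.exists_eq_add_of_lt h
    rw [hc, zero_add, Nat.add_sub_cancel, ← mem_iff_f₃_le hI hA]
    exact hSS.exchange₂₃ ((mem_iff_f₃_le hI hA).2 (by omega))

theorem f₃_add_right_le_sub (hI : IsMonomialIdeal S) (hA : IsArtinianMonomialSet S)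
    (hSS : IsStronglyStable S) (a b k : ℕ) : f₃ S a (b + k) ≤ f₃ S a b - k := by
  induction k with
  | zero => rfl
  | succ k ih =>
    have := f₃_succ_right_le_pred hI hA hSS a (b + k)
    rw [← add_assoc]
    omega

theorem fF_two_eq (α : ℕ → ℕ) : fF S 2 α = f₃ S (α 0) (α 1) := by
  have : ∀ t, monVec 3 2 α t = ![α 0, α 1, t] := fun t ↦ by funext l; fin_cases l <;> rfl
  simp only [fF, f₃, this]

theorem mem_JSet_two_iff (hI : IsMonomialIdeal S) (hA : IsArtinianMonomialSet S) {α : ℕ → ℕ} :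
    α ∈ JSet S 2 ↔ (∀ l, 2 ≤ l → α l = 0) ∧ 0 < f₃ S (α 0) (α 1) := by
  have h0 : monVec 3 0 α (α 0) = ![α 0, 0, 0] := by funext l; fin_cases l <;> rfl
  have h1 : monVec 3 1 α (α 1) = ![α 0, α 1, 0] := by funext l; fin_cases l <;> rfl
  have hpos : 0 < f₃ S (α 0) (α 1) ↔ ![α 0, α 1, 0] ∉ S := by
    rw [mem_iff_f₃_le hI hA, not_le]
  have hup : ![α 0, 0, 0] ∈ S → ![α 0, α 1, 0] ∈ S :=
    hI.isUpperSet fun l ↦ by fin_cases l <;> simp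
  refine and_congr_right fun _ ↦ ⟨fun h ↦ ?_, fun h j hj ↦ ?_⟩
  · simpa [hpos, lt_fF_iff hI hA, h1] using h 1 one_lt_two
  · interval_cases j
    · rw [lt_fF_iff hI hA (by norm_num), h0]
      exact mt hup (hpos.1 h)
    · rw [lt_fF_iff hI hA (by norm_num), h1]
      exact hpos.1 h

theorem forall_JSet_two_iff (hI : IsMonomialIdeal S) (hA : IsArtinianMonomialSet S) :
    (∀ α ∈ JSet S 2, fF S 2 (lastVec 2 (asum 2 α + 1)) + 1 ≤ fF S 2 α) ↔
      ∀ a b, 0 < f₃ S a b → f₃ S 0 (a + b + 1) < f₃ S a b := by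
  have hlast : ∀ s, fF S 2 (lastVec 2 s) = f₃ S 0 s := fun s ↦ by simp [fF_two_eq, lastVec]
  simp only [mem_JSet_two_iff hI hA, fF_two_eq, hlast, asum, Finset.sum_range_succ,
    Finset.sum_range_zero, zero_add, Nat.succ_le_iff]
  refine ⟨fun h a b hab ↦ ?_, fun h α hα ↦ h _ _ hα.2⟩
  exact h (fun l ↦ if l = 0 then a else if l = 1 then b else 0)
    ⟨fun l hl ↦ by split_ifs <;> omega, hab⟩

theorem f₃_zero_succ_lt_of_almostRevLex (hI : IsMonomialIdeal S) (hA : IsArtinianMonomialSet S)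
    (hARL : AlmostRevLex S) {a b : ℕ} (hab : 0 < f₃ S a b) :
    f₃ S 0 (a + b + 1) < f₃ S a b := by
  set c := f₃ S a b
  obtain ⟨g, hg, hgen⟩ := exists_isMinGen_le ((mem_iff_f₃_le hI hA (a := a) (b := b)).2 le_rfl)
  have hg0 : g 0 ≤ a := hg 0
  have hg1 : g 1 ≤ b := hg 1
  have hg2 : g 2 = c := le_antisymm (hg 2) (hgen.f₃_eq hI hA ▸ f₃_antitone hI hA hg0 hg1)
  have hM : ![0, g 0 + g 1 + 1, c - 1] ∈ S := by
    refine hARL _ g hgen ?_ ⟨2, ?_, fun l hl ↦ absurd hl (Fin.not_lt.2 (Fin.le_last l))⟩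
    · rw [mdeg_three, mdeg_three]; simp; omega
    · simp; omega
  calc f₃ S 0 (a + b + 1) ≤ f₃ S 0 (g 0 + g 1 + 1) := f₃_antitone hI hA le_rfl (by omega)
    _ ≤ c - 1 := (mem_iff_f₃_le hI hA).1 hM
    _ < c := by omega

theorem almostRevLex_of_f₃_zero_succ_lt (hI : IsMonomialIdeal S)
    (hA : IsArtinianMonomialSet S) (hSS : IsStronglyStable S)
    (h : ∀ a b, 0 < f₃ S a b → f₃ S 0 (a + b + 1) < f₃ S a b) : AlmostRevLex S := by
  intro M N hN hdeg hlt
  have hN2 := hN.f₃_eq hI hA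
  have hMeta : ![M 0, M 1, M 2] = M := by funext l; fin_cases l <;> rfl
  have hcases := revLexLT_three hlt hdeg
  rw [mdeg_three, mdeg_three] at hdeg
  rw [← hMeta, mem_iff_f₃_le hI hA]
  rcases hcases with h2 | ⟨h2, h1⟩
  · have hstar := h (N 0) (N 1) (by omega)
    calc f₃ S (M 0) (M 1) ≤ f₃ S 0 (M 1 + M 0) := by
          simpa using f₃_add_left_le hI hA hSS 0 (M 1) (M 0)
      _ = f₃ S 0 (N 0 + N 1 + 1 + (N 2 - M 2 - 1)) := by congr 1; omega
      _ ≤ f₃ S 0 (N 0 + N 1 + 1) - (N 2 - M 2 - 1) := f₃_add_right_le_sub hI hA hSS _ _ _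
      _ ≤ M 2 := by omega
  · calc f₃ S (M 0) (M 1) = f₃ S (N 0 + (N 1 - M 1)) (M 1) := by congr 1; omega
      _ ≤ f₃ S (N 0) (M 1 + (N 1 - M 1)) := f₃_add_left_le hI hA hSS _ _ _
      _ = M 2 := by rw [Nat.add_sub_cancel' h1.le, hN2, h2]

end ThreeVariables

/-- Proposition: three variables.  A strongly stable Artinian
monomial ideal `J` in `k[x_1,x_2,x_3]` is almost reverse lexicographic iff
`f_3(0,|α|+1) + 1 ≤ f_3(α)` for every `α ∈ J_2`.  (This is the monomial-ideal
content of: `S/I` has the strong Lefschetz property iff `gin(I)` is almost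
reverse lexicographic, for homogeneous Artinian `I ⊆ k[x_1,x_2,x_3]`.) -/
theorem three_variable_almostRevLex_iff
    (S : Set (Fin 3 → ℕ))
    (hIdeal : IsMonomialIdeal S) (hArt : IsArtinianMonomialSet S)
    (hSS : IsStronglyStable S) :
    AlmostRevLex S ↔
      ∀ α ∈ JSet S 2, fF S 2 (lastVec 2 (asum 2 α + 1)) + 1 ≤ fF S 2 α := by
  rw [forall_JSet_two_iff hIdeal hArt]
  exact ⟨fun h _ _ ↦ f₃_zero_succ_lt_of_almostRevLex hIdeal hArt h,
    almostRevLex_of_f₃_zero_succ_lt hIdeal hArt hSS⟩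
end

section
/- Let n ≥ 3 and let J be a strongly stable Artinian monomial ideal in R = k[x_1,…,x_n]. Then J is almost reverse lexicographic if and only if the following two conditions hold: (1) for each 2 ≤ i ≤ n−1 and every α = (α_1,…,α_i) ∈ J_i, f_{i+1}(0,…,0,|α|+1) + 1 ≤ f_{i+1}(α); and (2) for each 3 ≤ i ≤ n−1 and all α, β ∈ J_i with |α| = |β| and α < β in the reverse lexicographic order, f_{i+1}(β) ≤ f_{i+1}(α). (In particular the conditions of the general equivalence for i = 1, and condition (2) for i = 2, are automatically satisfied; this is the monomial-ideal content of the paper's Main Theorem.) -/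
open Finset

section

variable {n : ℕ} {S : Set (Fin n → ℕ)}

theorem IsMonomialIdeal.mem_of_le (hS : IsMonomialIdeal S) {u v : Fin n → ℕ} (hu : u ∈ S)
    (huv : u ≤ v) : v ∈ S := by
  simpa [add_tsub_cancel_of_le huv] using hS u hu (v - u)

theorem IsMonomialIdeal.isMinGen_iff (hS : IsMonomialIdeal S) {N : Fin n → ℕ} :
    IsMinGen S N ↔ N ∈ S ∧ ∀ r, 0 < N r → N - Pi.single r 1 ∉ S := by
  refine ⟨fun hN => ⟨hN.1, fun r hr hmem => ?_⟩, fun ⟨hN, hmin⟩ => ⟨hN, fun m hm hle => ?_⟩⟩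
  · have := congrFun (hN.2 _ hmem fun l => tsub_le_self) r
    simp only [Pi.sub_apply, Pi.single_eq_same] at this
    omega
  · by_contra hne
    obtain ⟨r, hr⟩ : ∃ r, m r < N r := by
      by_contra! h
      exact hne (funext fun l => le_antisymm (hle l) (h l))
    refine hmin r (by omega) (IsMonomialIdeal.mem_of_le hS hm fun l => ?_)
    have := hle l
    simp only [Pi.sub_apply, Pi.single_apply]
    split_ifs with h
    · subst h; omega
    · omega

theorem exists_last_pos {ι : Type*} [Fintype ι] [LinearOrder ι] {m : ι → ℕ} (h : ∃ j, 0 < m j) :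
    ∃ I, 0 < m I ∧ ∀ p, I < p → m p = 0 := by
  obtain ⟨j, hj⟩ := h
  obtain ⟨I, hI, hmax⟩ := (univ.filter fun p => 0 < m p).exists_max_image id ⟨j, by simpa⟩
  refine ⟨I, by simpa using hI, fun p hp => ?_⟩
  by_contra hne
  exact (hmax p (by simpa [Nat.pos_iff_ne_zero] using hne)).not_gt hp

theorem sum_Iic_move {m : Fin n → ℕ} {p q : Fin n} (hqp : q ≠ p) (hp : 0 < m p) (k : Fin n) :
    ∑ l ∈ Iic k, (if l = q then m q + 1 else if l = p then m p - 1 else m l) +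
        (if p ≤ k then 1 else 0) = ∑ l ∈ Iic k, m l + (if q ≤ k then 1 else 0) := by
  have : ∀ l, (if l = q then m q + 1 else if l = p then m p - 1 else m l) +
      (Pi.single p 1 : Fin n → ℕ) l = m l + (Pi.single q 1 : Fin n → ℕ) l := by
    intro l
    simp only [Pi.single_apply]
    split_ifs <;> subst_vars <;> omega
  simpa [sum_add_distrib] using sum_congr rfl fun l (_ : l ∈ Iic k) => this l

/-- Move one unit from the first index `p` where `m` exceeds `m'` to an earlier index `q` where it
falls short: the prefix sums of `m` ending in `[q, p)` are strictly below those of `m'`, so the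
move keeps them dominated. -/
theorem IsStronglyStable.exists_mem_closer (hSS : IsStronglyStable S) {m m' : Fin n → ℕ}
    (hm : m ∈ S) (h : ∀ k, ∑ l ∈ Iic k, m l ≤ ∑ l ∈ Iic k, m' l) (hle : ¬m ≤ m') :
    ∃ m₁ ∈ S, (∀ k, ∑ l ∈ Iic k, m₁ l ≤ ∑ l ∈ Iic k, m' l) ∧
      ∑ l, (m₁ l - m' l) < ∑ l, (m l - m' l) := by
  obtain ⟨p₀, hp₀⟩ : ∃ p, m' p < m p := by simpa [Pi.le_def] using hle
  obtain ⟨p, hp, hpmin⟩ := WellFounded.has_min wellFounded_lt {p | m' p < m p} ⟨p₀, hp₀⟩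
  simp only [Set.mem_ofPred_eq] at hp hpmin
  replace hpmin : ∀ l < p, m l ≤ m' l := fun l hl => by
    by_contra! h'
    exact hpmin l h' hl
  obtain ⟨q, hqp, hq⟩ : ∃ q < p, m q < m' q := by
    by_contra! hq
    have : ∑ l ∈ Iic p, m' l < ∑ l ∈ Iic p, m l :=
      sum_lt_sum (fun l hl => (mem_Iic.1 hl).lt_or_eq.elim (hq l) (· ▸ hp.le))
        ⟨p, mem_Iic.2 le_rfl, hp⟩
    exact (h p).not_gt this
  refine ⟨_, hSS m hm q p hqp (by omega), fun k => ?_,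
    sum_lt_sum (fun l _ => ?_) ⟨p, mem_univ _, ?_⟩⟩
  · have := sum_Iic_move hqp.ne (by omega : 0 < m p) k
    have := h k
    by_cases hpk : p ≤ k
    · simp only [hpk, hqp.le.trans hpk, if_true] at *
      omega
    by_cases hqk : q ≤ k
    · have : ∑ l ∈ Iic k, m l < ∑ l ∈ Iic k, m' l :=
        sum_lt_sum (fun l hl => hpmin l ((mem_Iic.1 hl).trans_lt (not_le.1 hpk)))
          ⟨q, mem_Iic.2 hqk, hq⟩
      simp only [hpk, hqk, if_true, if_false] at *
      omega
    · simp only [hpk, hqk, if_false] at *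
      omega
  · split_ifs <;> subst_vars <;> omega
  · simp only [if_neg hqp.ne', if_true]
    omega

theorem IsStronglyStable.mem_of_sum_Iic_le (hSS : IsStronglyStable S) (hS : IsMonomialIdeal S)
    {m m' : Fin n → ℕ} (hm : m ∈ S) (h : ∀ k, ∑ l ∈ Iic k, m l ≤ ∑ l ∈ Iic k, m' l) :
    m' ∈ S := by
  obtain ⟨d, hd⟩ : ∃ d, ∑ l, (m l - m' l) = d := ⟨_, rfl⟩
  induction d using Nat.strong_induction_on generalizing m with
  | _ d ih =>
  by_cases hle : m ≤ m'
  · exact IsMonomialIdeal.mem_of_le hS hm hle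
  obtain ⟨m₁, hm₁, h₁, hlt⟩ := IsStronglyStable.exists_mem_closer hSS hm h hle
  exact ih _ (hd ▸ hlt) hm₁ h₁ rfl

theorem monVec_apply_lt {i : ℕ} (α : ℕ → ℕ) (t : ℕ) {x : Fin n} (h : (x : ℕ) < i) :
    monVec n i α t x = α x := if_pos h

theorem monVec_apply_eq {i : ℕ} (α : ℕ → ℕ) (t : ℕ) {x : Fin n} (h : (x : ℕ) = i) :
    monVec n i α t x = t := by
  simp [monVec, h]

theorem monVec_apply_gt {i : ℕ} (α : ℕ → ℕ) (t : ℕ) {x : Fin n} (h : i < (x : ℕ)) :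
    monVec n i α t x = 0 := by
  simp [monVec, h.not_gt, h.ne']

theorem monVec_mono {i : ℕ} {α β : ℕ → ℕ} {s t : ℕ} (h : ∀ l < i, α l ≤ β l) (hst : s ≤ t) :
    monVec n i α s ≤ monVec n i β t := by
  intro p
  simp only [monVec]
  split_ifs with hp
  · exact h _ hp
  · exact hst
  · rfl

theorem monVec_sub_single_of_lt {i : ℕ} (α : ℕ → ℕ) (t : ℕ) {r : Fin n} (hr : (r : ℕ) < i) :
    monVec n i α t - Pi.single r 1 = monVec n i (α - Pi.single (r : ℕ) 1) t := by
  funext p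
  simp only [monVec, Pi.sub_apply, Pi.single_apply, Fin.ext_iff]
  split_ifs <;> omega

theorem monVec_sub_single_of_eq {i : ℕ} (α : ℕ → ℕ) (t : ℕ) {r : Fin n} (hr : (r : ℕ) = i) :
    monVec n i α t - Pi.single r 1 = monVec n i α (t - 1) := by
  funext p
  simp only [monVec, Pi.sub_apply, Pi.single_apply, Fin.ext_iff]
  split_ifs <;> omega

theorem sum_range_monVec_of_le {i r : ℕ} (α : ℕ → ℕ) (t : ℕ) (hri : r ≤ i) :
    ∑ p ∈ range r, (if p < i then α p else if p = i then t else 0) = ∑ p ∈ range r, α p :=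
  sum_congr rfl fun _ hp => if_pos ((mem_range.1 hp).trans_le hri)

theorem sum_range_monVec_of_lt {i r : ℕ} (α : ℕ → ℕ) (t : ℕ) (hir : i < r) :
    ∑ p ∈ range r, (if p < i then α p else if p = i then t else 0) = asum i α + t := by
  rw [← sum_range_add_sum_Ico _ hir.le, sum_range_monVec_of_le α t le_rfl,
    sum_eq_single_of_mem i (mem_Ico.2 ⟨le_rfl, hir⟩) fun p hp hpi => ?_]
  · simp [asum]
  · have := (mem_Ico.1 hp).1
    simp [hpi, show ¬p < i by omega]

theorem sum_Iic_monVec {i : ℕ} (α : ℕ → ℕ) (t : ℕ) (k : Fin n) :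
    ∑ l ∈ Iic k, monVec n i α t l =
      if (k : ℕ) < i then ∑ p ∈ range (k + 1), α p else asum i α + t := by
  have : ∑ l ∈ Iic k, monVec n i α t l =
      ∑ p ∈ range (k + 1), (if p < i then α p else if p = i then t else 0) := by
    rw [Nat.range_succ_eq_Iic, ← Fin.map_valEmbedding_Iic, sum_map]
    rfl
  rw [this]
  split_ifs with hk
  · exact sum_range_monVec_of_le α t hk
  · exact sum_range_monVec_of_lt α t (by omega)

theorem mdeg_monVec {i : ℕ} (hin : i < n) (α : ℕ → ℕ) (t : ℕ) :
    mdeg (monVec n i α t) = asum i α + t :=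
  (Fin.sum_univ_eq_sum_range (fun p => if p < i then α p else if p = i then t else 0) n).trans
    (sum_range_monVec_of_lt α t hin)

theorem IsStronglyStable.monVec_mem_of_sum_range_le (hSS : IsStronglyStable S)
    (hS : IsMonomialIdeal S) {i s t : ℕ} {α β : ℕ → ℕ} (hm : monVec n i α s ∈ S)
    (hpre : ∀ r ≤ i, ∑ p ∈ range r, α p ≤ ∑ p ∈ range r, β p)
    (htot : asum i α + s ≤ asum i β + t) : monVec n i β t ∈ S := by
  refine IsStronglyStable.mem_of_sum_Iic_le hSS hS hm fun k => ?_
  rw [sum_Iic_monVec, sum_Iic_monVec]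
  split_ifs with hk
  · exact hpre _ hk
  · exact htot

theorem asum_lastVec {i : ℕ} (hi : 1 ≤ i) (e : ℕ) : asum i (lastVec i e) = e := by
  simp [asum, lastVec, Finset.sum_ite_eq', show i - 1 < i by omega]

theorem IsStronglyStable.monVec_mem_of_lastVec_mem (hSS : IsStronglyStable S)
    (hS : IsMonomialIdeal S) {i e s t : ℕ} {β : ℕ → ℕ} (hi : 1 ≤ i) (he : e ≤ asum i β)
    (hst : s ≤ t) (hm : monVec n i (lastVec i e) s ∈ S) : monVec n i β t ∈ S := by
  refine IsStronglyStable.monVec_mem_of_sum_range_le hSS hS hm (fun r hr => ?_)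
    (by rw [asum_lastVec hi]; omega)
  rcases hr.lt_or_eq with hr | rfl
  · calc ∑ p ∈ range r, lastVec i e p = 0 :=
          sum_eq_zero fun p hp => if_neg (by have := mem_range.1 hp; omega)
      _ ≤ _ := Nat.zero_le _
  · rw [← asum, ← asum, asum_lastVec hi]
    exact he

theorem fF_spec (hArt : IsArtinianMonomialSet S) {i : ℕ} (hin : i < n) (α : ℕ → ℕ) :
    monVec n i α (fF S i α) ∈ S := by
  refine Nat.sInf_mem (s := {t | monVec n i α t ∈ S}) (Set.nonempty_iff_ne_empty.2 fun h => ?_)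
  have hinj : Function.Injective (monVec n i α) := fun a b hab => by
    simpa [monVec] using congrFun hab ⟨i, hin⟩
  refine Set.infinite_range_of_injective hinj (hArt.subset ?_)
  rintro _ ⟨t, rfl⟩ hmem
  exact (Set.eq_empty_iff_forall_notMem.1 h t) hmem

theorem monVec_mem_iff (hS : IsMonomialIdeal S) (hArt : IsArtinianMonomialSet S) {i : ℕ}
    (hin : i < n) {α : ℕ → ℕ} {t : ℕ} : monVec n i α t ∈ S ↔ fF S i α ≤ t :=
  ⟨fun h => Nat.sInf_le h, fun h =>
    IsMonomialIdeal.mem_of_le hS (fF_spec hArt hin α) (monVec_mono (fun _ _ => le_rfl) h)⟩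

theorem fF_antitone (hS : IsMonomialIdeal S) (hArt : IsArtinianMonomialSet S) {i : ℕ}
    (hin : i < n) {α β : ℕ → ℕ} (h : ∀ l < i, α l ≤ β l) : fF S i β ≤ fF S i α :=
  Nat.sInf_le (IsMonomialIdeal.mem_of_le hS (fF_spec hArt hin α) (monVec_mono h le_rfl))

theorem fF_le_fF_lastVec (hS : IsMonomialIdeal S) (hArt : IsArtinianMonomialSet S)
    (hSS : IsStronglyStable S) {i e : ℕ} (hi : 1 ≤ i) (hin : i < n) {β : ℕ → ℕ}
    (he : e ≤ asum i β) : fF S i β ≤ fF S i (lastVec i e) :=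
  Nat.sInf_le (IsStronglyStable.monVec_mem_of_lastVec_mem hSS hS hi he le_rfl
    (fF_spec hArt hin _))

theorem mem_JSet_iff (hS : IsMonomialIdeal S) (hArt : IsArtinianMonomialSet S) {i : ℕ}
    (hi : 1 ≤ i) (hin : i < n) {α : ℕ → ℕ} :
    α ∈ JSet S i ↔ (∀ l, i ≤ l → α l = 0) ∧ 0 < fF S i α := by
  rw [Nat.pos_iff_ne_zero, Ne, ← Nat.le_zero, ← monVec_mem_iff hS hArt hin]
  refine ⟨fun ⟨hsupp, hlt⟩ => ⟨hsupp, fun hmem => ?_⟩, fun ⟨hsupp, hnot⟩ => ⟨hsupp, fun j hj => ?_⟩⟩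
  · have : monVec n i α 0 = monVec n (i - 1) α (α (i - 1)) := by
      funext p
      simp only [monVec]
      split_ifs <;> grind
    rw [this] at hmem
    exact (hlt (i - 1) (by omega)).not_ge (Nat.sInf_le hmem)
  · by_contra! h
    refine hnot (IsMonomialIdeal.mem_of_le hS ((monVec_mem_iff hS hArt (by omega)).2 h) ?_)
    intro p
    simp only [monVec]
    split_ifs <;> grind

theorem mem_JSet_of_le (hS : IsMonomialIdeal S) (hArt : IsArtinianMonomialSet S) {i : ℕ}
    (hi : 1 ≤ i) (hin : i < n) {α β : ℕ → ℕ} (hα : α ∈ JSet S i) (hβα : β ≤ α) :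
    β ∈ JSet S i := by
  rw [mem_JSet_iff hS hArt hi hin] at hα ⊢
  exact ⟨fun l hl => Nat.eq_zero_of_le_zero (hα.1 l hl ▸ hβα l),
    hα.2.trans_le (fF_antitone hS hArt hin fun l _ => hβα l)⟩

theorem lastVec_mem_JSet (hS : IsMonomialIdeal S) (hArt : IsArtinianMonomialSet S)
    (hSS : IsStronglyStable S) {i e : ℕ} (hi : 1 ≤ i) (hin : i < n) {γ : ℕ → ℕ}
    (hγ : γ ∈ JSet S i) (he : e ≤ asum i γ) : lastVec i e ∈ JSet S i := by
  rw [mem_JSet_iff hS hArt hi hin] at hγ ⊢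
  exact ⟨fun l hl => if_neg (by omega), hγ.2.trans_le (fF_le_fF_lastVec hS hArt hSS hi hin he)⟩

theorem asum_sub_single {i r : ℕ} {α : ℕ → ℕ} (hr : r < i) (hαr : 0 < α r) :
    asum i (α - Pi.single r 1) + 1 = asum i α := by
  calc asum i (α - Pi.single r 1) + 1
      = ∑ l ∈ range i, ((α - Pi.single r 1 : ℕ → ℕ) l + (Pi.single r 1 : ℕ → ℕ) l) := by
        rw [sum_add_distrib, sum_pi_single', if_pos (mem_range.2 hr)]
        rfl
    _ = asum i α := sum_congr rfl fun l _ => by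
        simp only [Pi.sub_apply, Pi.single_apply]
        split_ifs <;> subst_vars <;> omega

theorem isMinGen_monVec_fF_or (hS : IsMonomialIdeal S) (hArt : IsArtinianMonomialSet S) {i : ℕ}
    (hin : i < n) (α : ℕ → ℕ) :
    IsMinGen S (monVec n i α (fF S i α)) ∨
      ∃ r < i, 0 < α r ∧ fF S i (α - Pi.single r 1) ≤ fF S i α := by
  refine or_iff_not_imp_right.2 fun h =>
    (IsMonomialIdeal.isMinGen_iff hS).2 ⟨fF_spec hArt hin α, fun r hr => ?_⟩
  push Not at h
  rcases lt_trichotomy (r : ℕ) i with hri | hri | hri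
  · rw [monVec_apply_lt _ _ hri] at hr
    rw [monVec_sub_single_of_lt _ _ hri, monVec_mem_iff hS hArt hin]
    exact (h r hri hr).not_ge
  · rw [monVec_apply_eq _ _ hri] at hr
    rw [monVec_sub_single_of_eq _ _ hri, monVec_mem_iff hS hArt hin]
    omega
  · rw [monVec_apply_gt _ _ hri] at hr
    omega

theorem revLexLT_monVec_of_lt {i s t : ℕ} (hin : i < n) (α β : ℕ → ℕ) (hts : t < s) :
    RevLexLT (monVec n i α s) (monVec n i β t) :=
  ⟨⟨i, hin⟩, by simpa [monVec] using hts, fun _ hl => by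
    rw [monVec_apply_gt _ _ hl, monVec_apply_gt _ _ hl]⟩

theorem revLexLT_monVec_of_revLexLT' {i : ℕ} (hin : i < n) {α β : ℕ → ℕ}
    (hα : ∀ l, i ≤ l → α l = 0) (h : RevLexLT' α β) (s : ℕ) :
    RevLexLT (monVec n i α s) (monVec n i β s) := by
  obtain ⟨j, hj, hjl⟩ := h
  have hji : j < i := by
    by_contra! hij
    rw [hα j hij] at hj
    omega
  refine ⟨⟨j, hji.trans hin⟩, by simpa [monVec, hji] using hj, fun l hl => ?_⟩
  simp only [monVec]
  split_ifs with hli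
  · exact hjl l hl
  all_goals rfl

theorem AlmostRevLex.fF_lastVec_add_one_le (hARL : AlmostRevLex S) (hS : IsMonomialIdeal S)
    (hArt : IsArtinianMonomialSet S) {i : ℕ} (hi : 1 ≤ i) (hin : i < n) {α : ℕ → ℕ}
    (hα : α ∈ JSet S i) : fF S i (lastVec i (asum i α + 1)) + 1 ≤ fF S i α := by
  obtain ⟨d, hd⟩ : ∃ d, asum i α = d := ⟨_, rfl⟩
  induction d using Nat.strong_induction_on generalizing α with
  | _ d ih =>
  have hpos := ((mem_JSet_iff hS hArt hi hin).1 hα).2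
  rcases isMinGen_monVec_fF_or hS hArt hin α with hmin | ⟨r, hr, hαr, hle⟩
  · have hM := hARL _ _ hmin (by rw [mdeg_monVec hin, mdeg_monVec hin, asum_lastVec hi]; omega)
      (revLexLT_monVec_of_lt hin α (lastVec i (asum i α + 1)) (Nat.sub_lt hpos one_pos))
    rw [monVec_mem_iff hS hArt hin] at hM
    omega
  · have hsub := asum_sub_single hr hαr
    have hrec := ih _ (by omega)
      (mem_JSet_of_le hS hArt hi hin hα (tsub_le_self (b := Pi.single r 1))) rfl
    rw [hsub] at hrec
    have hmono : fF S i (lastVec i (asum i α + 1)) ≤ fF S i (lastVec i (asum i α)) :=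
      fF_antitone hS hArt hin fun l _ => by
        simp only [lastVec]
        split_ifs <;> omega
    omega

theorem AlmostRevLex.fF_le_of_revLexLT' (hARL : AlmostRevLex S) (hS : IsMonomialIdeal S)
    (hArt : IsArtinianMonomialSet S) (hSS : IsStronglyStable S) {i : ℕ} (hi : 1 ≤ i)
    (hin : i < n) {α β : ℕ → ℕ} (hα : α ∈ JSet S i) (hab : asum i α = asum i β)
    (hlt : RevLexLT' α β) : fF S i β ≤ fF S i α := by
  rcases isMinGen_monVec_fF_or hS hArt hin α with hmin | ⟨r, hr, hαr, hle⟩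
  · have hM := hARL _ _ hmin (by rw [mdeg_monVec hin, mdeg_monVec hin, hab])
      (revLexLT_monVec_of_revLexLT' hin hα.1 hlt _)
    exact (monVec_mem_iff hS hArt hin).1 hM
  · have h₁ := AlmostRevLex.fF_lastVec_add_one_le hARL hS hArt hi hin
      (mem_JSet_of_le hS hArt hi hin hα (tsub_le_self (b := Pi.single r 1)))
    rw [asum_sub_single hr hαr, hab] at h₁
    have h₂ := fF_le_fF_lastVec hS hArt hSS hi hin (le_refl (asum i β))
    omega

theorem fF_lastVec_add_one_le_of_eq_one (hS : IsMonomialIdeal S) (hArt : IsArtinianMonomialSet S)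
    (hSS : IsStronglyStable S) (hin : 1 < n) {α : ℕ → ℕ} (hα : α ∈ JSet S 1) :
    fF S 1 (lastVec 1 (asum 1 α + 1)) + 1 ≤ fF S 1 α := by
  have hpos := ((mem_JSet_iff hS hArt le_rfl hin).1 hα).2
  have hmem : monVec n 1 (lastVec 1 (asum 1 α + 1)) (fF S 1 α - 1) ∈ S := by
    refine IsStronglyStable.monVec_mem_of_sum_range_le hSS hS (fF_spec hArt hin α)
      (fun r hr => ?_) (by rw [asum_lastVec le_rfl]; omega)
    interval_cases r <;> simp [lastVec, asum]
  rw [monVec_mem_iff hS hArt hin] at hmem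
  omega

theorem fF_le_of_revLexLT'_of_le_two (hS : IsMonomialIdeal S) (hArt : IsArtinianMonomialSet S)
    (hSS : IsStronglyStable S) {i : ℕ} (hi : i ≤ 2) (hin : i < n) {α β : ℕ → ℕ}
    (hα : ∀ l, i ≤ l → α l = 0) (hab : asum i α = asum i β) (hlt : RevLexLT' α β) :
    fF S i β ≤ fF S i α := by
  obtain ⟨j, hj, hjl⟩ := hlt
  have hji : j < i := by
    by_contra! hij
    rw [hα j hij] at hj
    omega
  have hpre : ∀ r ≤ i, ∑ p ∈ range r, α p ≤ ∑ p ∈ range r, β p := by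
    intro r hr
    have h₁ := hjl 1
    simp only [asum] at hab
    interval_cases i <;> interval_cases r <;> interval_cases j <;>
      simp [sum_range_succ] at hab h₁ ⊢ <;> omega
  exact Nat.sInf_le (IsStronglyStable.monVec_mem_of_sum_range_le hSS hS (fF_spec hArt hin α) hpre
    (by rw [hab]))

theorem fF_add_asum_le_of_asum_lt (hS : IsMonomialIdeal S) (hArt : IsArtinianMonomialSet S)
    (hSS : IsStronglyStable S) {i : ℕ} (hi : 1 ≤ i) (hin : i < n)
    (hC : ∀ α ∈ JSet S i, fF S i (lastVec i (asum i α + 1)) + 1 ≤ fF S i α)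
    {α γ : ℕ → ℕ} (hα : α ∈ JSet S i) (hγ : γ ∈ JSet S i) (hlt : asum i α < asum i γ) :
    fF S i γ + asum i γ ≤ fF S i α + asum i α := by
  have hchain : ∀ e, asum i α < e → e ≤ asum i γ →
      fF S i (lastVec i e) + e ≤ fF S i α + asum i α := by
    intro e he heγ
    induction e with
    | zero => omega
    | succ e ih =>
      rcases (Nat.lt_succ_iff.1 he).eq_or_lt with rfl | he'
      · have := hC α hα
        omega
      · have hstep := hC _ (lastVec_mem_JSet hS hArt hSS hi hin hγ (e := e) (by omega))
        rw [asum_lastVec hi] at hstep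
        have := ih he' (by omega)
        omega
  have := fF_le_fF_lastVec hS hArt hSS hi hin (le_refl (asum i γ))
  have := hchain _ hlt le_rfl
  omega

def truncVec (m : Fin n → ℕ) (i : ℕ) : ℕ → ℕ :=
  fun l => if h : l < i ∧ l < n then m ⟨l, h.2⟩ else 0

theorem truncVec_of_le {m : Fin n → ℕ} {i l : ℕ} (h : i ≤ l) : truncVec m i l = 0 :=
  dif_neg (by omega)

theorem truncVec_apply {m : Fin n → ℕ} {i : ℕ} {p : Fin n} (h : (p : ℕ) < i) :
    truncVec m i p = m p := by
  simp [truncVec, h]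

theorem monVec_truncVec {m : Fin n → ℕ} {I : Fin n} (h : ∀ p, I < p → m p = 0) :
    monVec n I (truncVec m I) (m I) = m := by
  funext p
  rcases lt_trichotomy (p : ℕ) I with hp | hp | hp
  · rw [monVec_apply_lt _ _ hp, truncVec_apply hp]
  · rw [monVec_apply_eq _ _ hp, Fin.ext hp]
  · rw [monVec_apply_gt _ _ hp, h p hp]

theorem fF_truncVec_of_isMinGen (hS : IsMonomialIdeal S) (hArt : IsArtinianMonomialSet S)
    {N : Fin n → ℕ} (hN : IsMinGen S N) {I : Fin n} (hNI : 0 < N I)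
    (hNzero : ∀ p, I < p → N p = 0) : fF S I (truncVec N I) = N I := by
  have hNeq := monVec_truncVec hNzero
  have hNsub := ((IsMonomialIdeal.isMinGen_iff hS).1 hN).2 I hNI
  rw [← hNeq, monVec_sub_single_of_eq _ _ rfl, monVec_mem_iff hS hArt I.isLt] at hNsub
  have := (monVec_mem_iff hS hArt I.isLt).1 (hNeq ▸ hN.1)
  omega

theorem lt_fF_truncVec_of_notMem (hS : IsMonomialIdeal S) (hArt : IsArtinianMonomialSet S)
    {M : Fin n → ℕ} (hM : M ∉ S) {I : Fin n} (hMzero : ∀ p, I < p → M p = 0) :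
    M I < fF S I (truncVec M I) := by
  rw [← monVec_truncVec hMzero, monVec_mem_iff hS hArt I.isLt] at hM
  omega

theorem revLexLT'_truncVec {M N : Fin n → ℕ} {j I : Fin n} (hjI : j < I) (hj : M j < N j)
    (hjM : ∀ l, j < l → N l = M l) : RevLexLT' (truncVec N I) (truncVec M I) := by
  refine ⟨j, by simpa [truncVec_apply (Fin.lt_def.1 hjI)] using hj, fun l hl => ?_⟩
  simp only [truncVec]
  split_ifs with h
  · exact hjM ⟨l, h.2⟩ hl
  · rfl

theorem almostRevLex_of_conditions (hS : IsMonomialIdeal S) (hArt : IsArtinianMonomialSet S)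
    (hSS : IsStronglyStable S)
    (hC₁ : ∀ i, 1 ≤ i → i < n →
      ∀ α ∈ JSet S i, fF S i (lastVec i (asum i α + 1)) + 1 ≤ fF S i α)
    (hC₂ : ∀ i, 1 ≤ i → i < n → ∀ α ∈ JSet S i, ∀ β ∈ JSet S i,
      asum i α = asum i β → RevLexLT' α β → fF S i β ≤ fF S i α) :
    AlmostRevLex S := by
  rintro M N hN hdeg ⟨j, hj, hjM⟩
  by_contra hM
  obtain ⟨I, hNI, hNzero⟩ := exists_last_pos ⟨j, (Nat.zero_le _).trans_lt hj⟩
  have hjI : j ≤ I := not_lt.1 fun h => by rw [hNzero j h] at hj; omega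
  have hMzero : ∀ p, I < p → M p = 0 := fun p hp => hjM p (hjI.trans_lt hp) ▸ hNzero p hp
  have hsum : asum I (truncVec M I) + M I = asum I (truncVec N I) + N I := by
    rw [← mdeg_monVec I.isLt, ← mdeg_monVec I.isLt, monVec_truncVec hMzero,
      monVec_truncVec hNzero, hdeg]
  have hfα := fF_truncVec_of_isMinGen hS hArt hN hNI hNzero
  have hfγ := lt_fF_truncVec_of_notMem hS hArt hM hMzero
  have hJ : ∀ m : Fin n → ℕ, 1 ≤ (I : ℕ) → 0 < fF S I (truncVec m I) →
      truncVec m I ∈ JSet S I := fun m hI hpos =>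
    (mem_JSet_iff hS hArt hI I.isLt).2 ⟨fun _ hl => truncVec_of_le hl, hpos⟩
  rcases hjI.lt_or_eq with hjI | rfl
  · have hI : 1 ≤ (I : ℕ) := by have := Fin.lt_def.1 hjI; omega
    have hMI := hjM I hjI
    have := hC₂ I hI I.isLt _ (hJ N hI (by omega)) _ (hJ M hI (by omega)) (by omega)
      (revLexLT'_truncVec hjI hj hjM)
    omega
  · have hlt : asum j (truncVec N j) < asum j (truncVec M j) := by omega
    have hI : 1 ≤ (j : ℕ) := by
      by_contra h
      simp [asum, show (j : ℕ) = 0 by omega] at hlt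
    have := fF_add_asum_le_of_asum_lt hS hArt hSS hI j.isLt (hC₁ j hI j.isLt)
      (hJ N hI (by omega)) (hJ M hI (by omega)) hlt
    omega

end

theorem almostRevLex_iff_reduced_conditions_general
    {n : ℕ} (S : Set (Fin n → ℕ))
    (hIdeal : IsMonomialIdeal S) (hArt : IsArtinianMonomialSet S)
    (hSS : IsStronglyStable S) :
    AlmostRevLex S ↔
      ((∀ i, 2 ≤ i → i ≤ n - 1 →
          ∀ α ∈ JSet S i, fF S i (lastVec i (asum i α + 1)) + 1 ≤ fF S i α) ∧
       (∀ i, 3 ≤ i → i ≤ n - 1 →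
          ∀ α ∈ JSet S i, ∀ β ∈ JSet S i,
            asum i α = asum i β → RevLexLT' α β → fF S i β ≤ fF S i α)) := by
  refine ⟨fun hARL => ⟨fun i hi hin α hα => ?_, fun i hi hin α hα β _ hab hlt => ?_⟩,
    fun ⟨hC₁, hC₂⟩ => almostRevLex_of_conditions hIdeal hArt hSS
      (fun i hi hin α hα => ?_) (fun i hi hin α hα β hβ hab hlt => ?_)⟩
  · exact AlmostRevLex.fF_lastVec_add_one_le hARL hIdeal hArt (by omega) (by omega) hα
  · exact AlmostRevLex.fF_le_of_revLexLT' hARL hIdeal hArt hSS (by omega) (by omega) hα hab hlt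
  · rcases hi.eq_or_lt with rfl | hi
    · exact fF_lastVec_add_one_le_of_eq_one hIdeal hArt hSS hin hα
    · exact hC₁ i hi (by omega) α hα
  · rcases le_or_gt i 2 with hi2 | hi2
    · exact fF_le_of_revLexLT'_of_le_two hIdeal hArt hSS hi2 hin hα.1 hab hlt
    · exact hC₂ i hi2 (by omega) α hα β hβ hab hlt

/-- Main Theorem, monomial-ideal content.  Let `n ≥ 3` and let
`J` be a strongly stable Artinian monomial ideal in `k[x_1,…,x_n]`.  Then `J`
is almost reverse lexicographic iff:
(1) for each `2 ≤ i ≤ n-1` and every `α ∈ J_i`,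
    `f_{i+1}(0,…,0,|α|+1) + 1 ≤ f_{i+1}(α)`; and
(2) for each `3 ≤ i ≤ n-1` and all `α, β ∈ J_i` with `|α| = |β|` and `α < β`
    in reverse lexicographic order, `f_{i+1}(β) ≤ f_{i+1}(α)`. -/
theorem almostRevLex_iff_reduced_conditions
    {n : ℕ} (hn : 3 ≤ n) (S : Set (Fin n → ℕ))
    (hIdeal : IsMonomialIdeal S) (hArt : IsArtinianMonomialSet S)
    (hSS : IsStronglyStable S) :
    AlmostRevLex S ↔
      ((∀ i, 2 ≤ i → i ≤ n - 1 →
          ∀ α ∈ JSet S i, fF S i (lastVec i (asum i α + 1)) + 1 ≤ fF S i α) ∧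
       (∀ i, 3 ≤ i → i ≤ n - 1 →
          ∀ α ∈ JSet S i, ∀ β ∈ JSet S i,
            asum i α = asum i β → RevLexLT' α β → fF S i β ≤ fF S i α)) :=
  almostRevLex_iff_reduced_conditions_general S hIdeal hArt hSS
end

section
/- Let S = k[x,y,z,w] with the reverse lexicographic order given by x > y > z > w, and let I be the monomial ideal generated by x^2, xy^2, y^4, y^3z, xyz^2, y^2z^2, xz^3, yz^3, z^4, y^3w, xyzw, xz^2w^2, y^2zw^3, yz^2w^3, z^3w^3, xyw^4, y^2w^4, xzw^4, yzw^4, z^2w^4, xw^5, yw^5, zw^5, w^6. Then: (a) I is a strongly stable Artinian monomial ideal; (b) I satisfies f_4(0,0,|α|+1) + 1 ≤ f_4(α) for all α ∈ J_3 and f_3(0,|α|+1) + 1 ≤ f_3(α) for all α ∈ J_2; but (c) xz^2w^2 is a minimal generator of I, the monomial y^2zw^2 is greater than xz^2w^2 in the reverse lexicographic order and has the same degree, and y^2zw^2 ∉ I, so I is not almost reverse lexicographic. -/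
/-- The generators of the example ideal
`I = (x², xy², y⁴, y³z, xyz², y²z², xz³, yz³, z⁴, y³w, xyzw, xz²w², y²zw³,
yz²w³, z³w³, xyw⁴, y²w⁴, xzw⁴, yzw⁴, z²w⁴, xw⁵, yw⁵, zw⁵, w⁶) ⊆ k[x,y,z,w]`,
as exponent vectors `(x,y,z,w) = (x_1,x_2,x_3,x_4)`. -/
def exGens : Set (Fin 4 → ℕ) :=
  {![2,0,0,0], ![1,2,0,0], ![0,4,0,0], ![0,3,1,0], ![1,1,2,0], ![0,2,2,0],
   ![1,0,3,0], ![0,1,3,0], ![0,0,4,0], ![0,3,0,1], ![1,1,1,1], ![1,0,2,2],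
   ![0,2,1,3], ![0,1,2,3], ![0,0,3,3], ![1,1,0,4], ![0,2,0,4], ![1,0,1,4],
   ![0,1,1,4], ![0,0,2,4], ![1,0,0,5], ![0,1,0,5], ![0,0,1,5], ![0,0,0,6]}

/-- The monomial ideal generated by `exGens`: all monomials divisible by one of
the generators. -/
def exIdeal : Set (Fin 4 → ℕ) := {m | ∃ g ∈ exGens, ∀ l, g l ≤ m l}


/-!
Everything reduces to finite computations on the 24 generators. Membership in a monomial ideal
is divisibility by a generator, and strong stability and minimality of a generator only need
to be checked on generators. Since `x², y⁴, z⁴, w⁶ ∈ I`, each `f_i(α)` counts the standard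
monomials on a segment of length at most 6 (`fF_eq_card`), and every `α ∈ J_i` has
`α₁ < 2`, `α₂ < 4`, `α₃ < 4`; the Lefschetz inequalities are then checked tuple by tuple.
-/

open Finset

def monomialSpan {n : ℕ} (G : Set (Fin n → ℕ)) : Set (Fin n → ℕ) :=
  {m | ∃ g ∈ G, g ≤ m}

def borelMove {n : ℕ} (m : Fin n → ℕ) (i j : Fin n) : Fin n → ℕ :=
  fun l => if l = i then m i + 1 else if l = j then m j - 1 else m l

section MonomialIdeals

variable {n : ℕ}

theorem IsMonomialIdeal.mem_of_le_s15 {S : Set (Fin n → ℕ)} (hS : IsMonomialIdeal S)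
    {m m' : Fin n → ℕ} (hm : m ∈ S) (hle : m ≤ m') : m' ∈ S := by
  simpa [add_tsub_cancel_of_le hle] using hS m hm (m' - m)

theorem isArtinianMonomialSet_of_single_mem {S : Set (Fin n → ℕ)} (hS : IsMonomialIdeal S)
    (e : Fin n → ℕ) (he : ∀ l, Pi.single l (e l) ∈ S) : IsArtinianMonomialSet S := by
  refine (Set.finite_Iic e).subset fun m hm l => ?_
  by_contra! hl
  refine hm (hS.mem_of_le_s15 (he l) fun l' => ?_)
  rcases eq_or_ne l' l with rfl | hne
  · simpa using hl.le
  · simp [hne]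

theorem isMonomialIdeal_monomialSpan (G : Set (Fin n → ℕ)) :
    IsMonomialIdeal (monomialSpan G) :=
  fun _ ⟨g, hg, hle⟩ _ => ⟨g, hg, hle.trans le_self_add⟩

theorem borelMove_mono {g m : Fin n → ℕ} (hle : g ≤ m) (i j : Fin n) :
    borelMove g i j ≤ borelMove m i j := fun l => by
  have hi : g i ≤ m i := hle i
  have hj : g j ≤ m j := hle j
  unfold borelMove
  split_ifs
  exacts [Nat.add_le_add_right hi 1, Nat.sub_le_sub_right hj 1, hle l]

theorem le_borelMove {g m : Fin n → ℕ} (hle : g ≤ m) {i j : Fin n} (hgj : g j = 0) :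
    g ≤ borelMove m i j := fun l => by
  unfold borelMove
  split_ifs with hi hj
  · subst hi; exact (hle l).trans (Nat.le_succ _)
  · subst hj; simp [hgj]
  · exact hle l

theorem isStronglyStable_monomialSpan {G : Set (Fin n → ℕ)}
    (hG : ∀ g ∈ G, ∀ i j, i < j → 0 < g j → borelMove g i j ∈ monomialSpan G) :
    IsStronglyStable (monomialSpan G) := by
  rintro m ⟨g, hg, hle⟩ i j hij -
  rcases Nat.eq_zero_or_pos (g j) with hgj | hgj
  · exact ⟨g, hg, le_borelMove hle hgj⟩
  · obtain ⟨g', hg', hle'⟩ := hG g hg i j hij hgj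
    exact ⟨g', hg', hle'.trans (borelMove_mono hle i j)⟩

theorem isMinGen_monomialSpan {G : Set (Fin n → ℕ)} {g : Fin n → ℕ} (hg : g ∈ G)
    (hmin : ∀ g' ∈ G, g' ≤ g → g' = g) : IsMinGen (monomialSpan G) g :=
  ⟨⟨g, hg, le_rfl⟩, fun _ ⟨g', hg', hle'⟩ hle =>
    le_antisymm hle (hmin g' hg' (hle'.trans hle) ▸ hle')⟩

theorem monVec_mono_s15 (n i : ℕ) (α : ℕ → ℕ) : Monotone (monVec n i α) := fun t t' h l => by
  unfold monVec
  split_ifs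
  exacts [le_rfl, h, le_rfl]

theorem single_le_monVec {i : ℕ} (hi : i < n) (α : ℕ → ℕ) (t : ℕ) :
    Pi.single ⟨i, hi⟩ t ≤ monVec n i α t := fun l => by
  rcases eq_or_ne l ⟨i, hi⟩ with rfl | hne
  · simp [monVec]
  · simp [hne]

theorem fF_le {S : Set (Fin n → ℕ)} {i : ℕ} {α : ℕ → ℕ} {t : ℕ} (h : monVec n i α t ∈ S) :
    fF S i α ≤ t :=
  Nat.sInf_le h

theorem fF_le_of_single_mem {S : Set (Fin n → ℕ)} (hS : IsMonomialIdeal S) {i : ℕ} (hi : i < n)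
    {e : ℕ} (he : Pi.single ⟨i, hi⟩ e ∈ S) (α : ℕ → ℕ) : fF S i α ≤ e :=
  fF_le (hS.mem_of_le_s15 he (single_le_monVec hi α e))

theorem fF_eq_card {S : Set (Fin n → ℕ)} [DecidablePred (· ∈ S)] (hS : IsMonomialIdeal S)
    {i : ℕ} {α : ℕ → ℕ} {N : ℕ} (hN : monVec n i α N ∈ S) :
    fF S i α = #{t ∈ range N | monVec n i α t ∉ S} := by
  have hmem : ∀ t, monVec n i α t ∈ S ↔ fF S i α ≤ t := fun t =>
    ⟨fF_le, fun h => hS.mem_of_le_s15 (Nat.sInf_mem (s := {t | monVec n i α t ∈ S}) ⟨N, hN⟩)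
      (monVec_mono_s15 n i α h)⟩
  have hle : fF S i α ≤ N := fF_le hN
  have : {t ∈ range N | monVec n i α t ∉ S} = range (fF S i α) := by
    ext t
    simp only [mem_filter, mem_range, hmem, not_le]
    omega
  rw [this, card_range]

end MonomialIdeals

def exGensList : List (Fin 4 → ℕ) :=
  [![2,0,0,0], ![1,2,0,0], ![0,4,0,0], ![0,3,1,0], ![1,1,2,0], ![0,2,2,0],
   ![1,0,3,0], ![0,1,3,0], ![0,0,4,0], ![0,3,0,1], ![1,1,1,1], ![1,0,2,2],
   ![0,2,1,3], ![0,1,2,3], ![0,0,3,3], ![1,1,0,4], ![0,2,0,4], ![1,0,1,4],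
   ![0,1,1,4], ![0,0,2,4], ![1,0,0,5], ![0,1,0,5], ![0,0,1,5], ![0,0,0,6]]

theorem mem_exGens_iff (g : Fin 4 → ℕ) : g ∈ exGens ↔ g ∈ exGensList := by
  simp [exGens, exGensList]

theorem exIdeal_eq_monomialSpan : exIdeal = monomialSpan exGens := rfl

theorem mem_exIdeal_iff (m : Fin 4 → ℕ) : m ∈ exIdeal ↔ ∃ g ∈ exGensList, ∀ l, g l ≤ m l := by
  simp only [exIdeal, Set.mem_ofPred_eq, mem_exGens_iff]

instance : DecidablePred (· ∈ exIdeal) := fun m => decidable_of_iff _ (mem_exIdeal_iff m).symm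

theorem isMonomialIdeal_exIdeal : IsMonomialIdeal exIdeal := isMonomialIdeal_monomialSpan exGens

def exPowers : Fin 4 → ℕ := ![2, 4, 4, 6]

theorem single_exPowers_mem_exIdeal : ∀ i, Pi.single i (exPowers i) ∈ exIdeal := by
  decide

theorem isArtinianMonomialSet_exIdeal : IsArtinianMonomialSet exIdeal :=
  isArtinianMonomialSet_of_single_mem isMonomialIdeal_exIdeal exPowers
    single_exPowers_mem_exIdeal

theorem isStronglyStable_exIdeal : IsStronglyStable exIdeal := by
  refine isStronglyStable_monomialSpan fun g hg => ?_
  rw [mem_exGens_iff] at hg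
  rw [← exIdeal_eq_monomialSpan]
  revert g
  decide

theorem isMinGen_exIdeal : IsMinGen exIdeal ![1, 0, 2, 2] := by
  refine isMinGen_monomialSpan ((mem_exGens_iff _).2 (by decide)) fun g hg => ?_
  rw [mem_exGens_iff] at hg
  revert g
  simp only [Pi.le_def]
  decide

theorem fF_exIdeal_le (i : Fin 4) (α : ℕ → ℕ) : fF exIdeal i α ≤ exPowers i :=
  fF_le_of_single_mem isMonomialIdeal_exIdeal i.2 (single_exPowers_mem_exIdeal i) α

theorem exIdeal_fF_eq_card {i : ℕ} (hi : i < 4) (α : ℕ → ℕ) :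
    fF exIdeal i α = #{t ∈ range (exPowers ⟨i, hi⟩) | monVec 4 i α t ∉ exIdeal} :=
  fF_eq_card isMonomialIdeal_exIdeal <| isMonomialIdeal_exIdeal.mem_of_le_s15
    (single_exPowers_mem_exIdeal ⟨i, hi⟩) (single_le_monVec hi α _)

def vec3 (a b c : ℕ) : ℕ → ℕ :=
  fun l => if l = 0 then a else if l = 1 then b else if l = 2 then c else 0

theorem eq_vec3 {α : ℕ → ℕ} (h : ∀ l, 3 ≤ l → α l = 0) : α = vec3 (α 0) (α 1) (α 2) := by
  funext l
  rcases l with _ | _ | _ | l <;> simp [vec3, h]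

-- The decidability instance of these nested bounded quantifiers exceeds the default size limit.
set_option synthInstance.maxSize 512 in
theorem exIdeal_slp_three_vec3 : ∀ a < 2, ∀ b < 4, ∀ c < 4,
    a < fF exIdeal 0 (vec3 a b c) → b < fF exIdeal 1 (vec3 a b c) →
    c < fF exIdeal 2 (vec3 a b c) →
    fF exIdeal 3 (lastVec 3 (a + b + c + 1)) + 1 ≤ fF exIdeal 3 (vec3 a b c) := by
  simp (disch := norm_num) only [exIdeal_fF_eq_card]
  decide

set_option synthInstance.maxSize 512 in
theorem exIdeal_slp_two_vec3 : ∀ a < 2, ∀ b < 4,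
    a < fF exIdeal 0 (vec3 a b 0) → b < fF exIdeal 1 (vec3 a b 0) →
    fF exIdeal 2 (lastVec 2 (a + b + 1)) + 1 ≤ fF exIdeal 2 (vec3 a b 0) := by
  simp (disch := norm_num) only [exIdeal_fF_eq_card]
  decide

theorem exIdeal_slp_three : ∀ α ∈ JSet exIdeal 3,
    fF exIdeal 3 (lastVec 3 (asum 3 α + 1)) + 1 ≤ fF exIdeal 3 α := by
  rintro α ⟨hzero, hlt⟩
  obtain ⟨a, b, c, rfl⟩ : ∃ a b c, α = vec3 a b c := ⟨_, _, _, eq_vec3 hzero⟩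
  have hsum : asum 3 (vec3 a b c) = a + b + c := by simp [asum, sum_range_succ, vec3]
  have hbound (i : Fin 4) (hi : (i : ℕ) < 3) := (hlt i hi).trans_le (fF_exIdeal_le i _)
  rw [hsum]
  exact exIdeal_slp_three_vec3 a (hbound 0 (by decide)) b (hbound 1 (by decide))
    c (hbound 2 (by decide)) (hlt 0 (by norm_num)) (hlt 1 (by norm_num)) (hlt 2 (by norm_num))

theorem exIdeal_slp_two : ∀ α ∈ JSet exIdeal 2,
    fF exIdeal 2 (lastVec 2 (asum 2 α + 1)) + 1 ≤ fF exIdeal 2 α := by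
  rintro α ⟨hzero, hlt⟩
  obtain ⟨a, b, rfl⟩ : ∃ a b, α = vec3 a b 0 :=
    ⟨_, _, (eq_vec3 fun l hl => hzero l (by omega)).trans (by rw [hzero 2 le_rfl])⟩
  have hsum : asum 2 (vec3 a b 0) = a + b := by simp [asum, sum_range_succ, vec3]
  have hbound (i : Fin 4) (hi : (i : ℕ) < 2) := (hlt i hi).trans_le (fF_exIdeal_le i _)
  rw [hsum]
  exact exIdeal_slp_two_vec3 a (hbound 0 (by decide)) b (hbound 1 (by decide))
    (hlt 0 (by norm_num)) (hlt 1 (by norm_num))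

/-- Example.  In `S = k[x,y,z,w]` the displayed monomial
ideal `I` satisfies: (a) `I` is a strongly stable Artinian monomial ideal;
(b) `f_4(0,0,|α|+1) + 1 ≤ f_4(α)` for all `α ∈ J_3` and
`f_3(0,|α|+1) + 1 ≤ f_3(α)` for all `α ∈ J_2` (the strong Lefschetz
conditions); but (c) `xz²w²` is a minimal generator of `I`, `y²zw²` has the
same degree and is greater in the reverse lexicographic order, yet
`y²zw² ∉ I`; hence `I` is not almost reverse lexicographic. -/
theorem example_SLP_conditions_but_not_almostRevLex :
    (IsMonomialIdeal exIdeal ∧ IsArtinianMonomialSet exIdeal ∧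
      IsStronglyStable exIdeal) ∧
    ((∀ α ∈ JSet exIdeal 3,
        fF exIdeal 3 (lastVec 3 (asum 3 α + 1)) + 1 ≤ fF exIdeal 3 α) ∧
     (∀ α ∈ JSet exIdeal 2,
        fF exIdeal 2 (lastVec 2 (asum 2 α + 1)) + 1 ≤ fF exIdeal 2 α)) ∧
    (IsMinGen exIdeal ![1,0,2,2] ∧
      mdeg (![0,2,1,2] : Fin 4 → ℕ) = mdeg (![1,0,2,2] : Fin 4 → ℕ) ∧
      RevLexLT ![1,0,2,2] ![0,2,1,2] ∧
      ![0,2,1,2] ∉ exIdeal ∧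
      ¬ AlmostRevLex exIdeal) := by
  have hdeg : mdeg (![0,2,1,2] : Fin 4 → ℕ) = mdeg (![1,0,2,2] : Fin 4 → ℕ) := rfl
  have hrevlex : RevLexLT ![1,0,2,2] ![0,2,1,2] := ⟨2, by decide, by decide⟩
  have hnot : ![0,2,1,2] ∉ exIdeal := by decide
  exact ⟨⟨isMonomialIdeal_exIdeal, isArtinianMonomialSet_exIdeal, isStronglyStable_exIdeal⟩,
    ⟨exIdeal_slp_three, exIdeal_slp_two⟩,
    isMinGen_exIdeal, hdeg, hrevlex, hnot, fun h => hnot (h _ _ isMinGen_exIdeal hdeg hrevlex)⟩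
end
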